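/- arXiv:2002.09553 — 2 statements merged into one kernel-verified Lean document; each statement's English description precedes it below -/
import Mathlib

section
/- In the channel model with Markov encoders, for every 1 ≤ t ≤ n, every w ∈ 𝒲 and every y_{1:t} ∈ 𝒴^t with P(W = w, Y_{1:t} = y_{1:t}) > 0, let η_{t-1}(u) := P(U_t = u | Y_{1:t-1} = y_{1:t-1}, W = w). Then for all u_t, u_{t+1} ∈ 𝒰: P(U_t = u_t, U_{t+1} = u_{t+1} | Y_{1:t} = y_{1:t}, W = w) = [η_{t-1}(u_t) · Q^f(y_t | φ_t(w,u_t)) · Σ_z Q^b(z | y_t) · 𝟙{u_{t+1} = G²(u_t, φ_t, z, w)}] / [Σ_u η_{t-1}(u) · Q^f(y_t | φ_t(w,u))]. In particular this update depends only on η_{t-1}, φ_t and y_t. -/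
open scoped ENNReal Classical
open Finset

namespace NoisyFeedback

variable {W X Y Z U : Type*}

/-- Memory evolution: `mem G2 u1 φ w t zs` is the sender's memory after having
observed the feedback symbols `zs = z_{1:t}`. -/
def mem (G2 : U → (W × U → X) → Z → W → U) (u1 : U) (φ : ℕ → W × U → X) (w : W) :
    (t : ℕ) → (Fin t → Z) → U
  | 0, _ => u1
  | t + 1, zs => G2 (mem G2 u1 φ w t (Fin.init zs)) (φ t) (zs (Fin.last t)) w

variable [Fintype W] [Fintype X] [Fintype Y] [Fintype Z] [Fintype U]

/-- Joint pmf `P(W = w, Y_{1:t} = ys, Z_{1:t} = zs)` of the channel model with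
Markov encoders `φ`. -/
noncomputable def jointP (Qf : X → PMF Y) (Qb : Y → PMF Z)
    (G2 : U → (W × U → X) → Z → W → U) (u1 : U) (φ : ℕ → W × U → X)
    (t : ℕ) (w : W) (ys : Fin t → Y) (zs : Fin t → Z) : ℝ≥0∞ :=
  (Fintype.card W : ℝ≥0∞)⁻¹ *
    ∏ i : Fin t,
      Qf (φ i (w, mem G2 u1 φ w i (fun j => zs (Fin.castLE i.2.le j)))) (ys i) *
        Qb (ys i) (zs i)

/-- `P(Y_{1:t} = ys)`. -/
noncomputable def probY (Qf : X → PMF Y) (Qb : Y → PMF Z)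
    (G2 : U → (W × U → X) → Z → W → U) (u1 : U) (φ : ℕ → W × U → X)
    (t : ℕ) (ys : Fin t → Y) : ℝ≥0∞ :=
  ∑ w : W, ∑ zs : Fin t → Z, jointP Qf Qb G2 u1 φ t w ys zs

/-- `P(W = w, Y_{1:t} = ys)`. -/
noncomputable def probWY (Qf : X → PMF Y) (Qb : Y → PMF Z)
    (G2 : U → (W × U → X) → Z → W → U) (u1 : U) (φ : ℕ → W × U → X)
    (t : ℕ) (ys : Fin t → Y) (w : W) : ℝ≥0∞ :=
  ∑ zs : Fin t → Z, jointP Qf Qb G2 u1 φ t w ys zs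

/-- `P(W = w, Z_{1:t} = zs)`. -/
noncomputable def probWZ (Qf : X → PMF Y) (Qb : Y → PMF Z)
    (G2 : U → (W × U → X) → Z → W → U) (u1 : U) (φ : ℕ → W × U → X)
    (t : ℕ) (w : W) (zs : Fin t → Z) : ℝ≥0∞ :=
  ∑ ys : Fin t → Y, jointP Qf Qb G2 u1 φ t w ys zs

/-- `P(W = w, U_{t+1} = u, Y_{1:t} = ys)` (memory after `t` feedback symbols). -/
noncomputable def probWUY (Qf : X → PMF Y) (Qb : Y → PMF Z)
    (G2 : U → (W × U → X) → Z → W → U) (u1 : U) (φ : ℕ → W × U → X)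
    (t : ℕ) (ys : Fin t → Y) (w : W) (u : U) : ℝ≥0∞ :=
  ∑ zs : Fin t → Z,
    if mem G2 u1 φ w t zs = u then jointP Qf Qb G2 u1 φ t w ys zs else 0


/-- `P(W = w, U_t = u, U_{t+1} = u', Y_{1:t} = ys)` for `ys` of length `t`
(0-based: memory before and after the `t`-th feedback symbol). -/
noncomputable def probWUUY (Qf : X → PMF Y) (Qb : Y → PMF Z)
    (G2 : U → (W × U → X) → Z → W → U) (u1 : U) (φ : ℕ → W × U → X)
    (t : ℕ) (ys : Fin (t + 1) → Y) (w : W) (u u' : U) : ℝ≥0∞ :=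
  ∑ zs : Fin (t + 1) → Z,
    if mem G2 u1 φ w t (Fin.init zs) = u ∧ mem G2 u1 φ w (t + 1) zs = u' then
      jointP Qf Qb G2 u1 φ (t + 1) w ys zs
    else 0

end NoisyFeedback

/-! Splitting the last feedback symbol off `z_{1:t}` factors the joint pmf, and since
`U_{t+1} = G²(U_t, φ_t, Z_t, W)`, summing over `z_{1:t-1}` gives
`P(W, U_t = u, U_{t+1} = u', Y_{1:t}) =
  P(W, U_t = u, Y_{1:t-1}) · Q^f(y_t | φ_t(w, u)) · Σ_z Q^b(z | y_t) 𝟙{u' = G²(u, φ_t, z, w)}`.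
Summing this over `u` and `u'` yields the denominator `P(W, Y_{1:t})`, and dividing numerator
and denominator by the finite, nonzero `P(W, Y_{1:t-1})` turns `P(W, U_t = u, Y_{1:t-1})`
into `η_{t-1}(u)`. -/

theorem PMF.sum_coe_eq_one {α : Type*} [Fintype α] (p : PMF α) : ∑ a, p a = 1 := by
  rw [← tsum_fintype (L := SummationFilter.unconditional _)]
  exact p.tsum_coe

theorem Fintype.sum_fin_succ_pi_eq_sum_snoc {α M : Type*} [Fintype α] [AddCommMonoid M] {t : ℕ}
    (f : (Fin (t + 1) → α) → M) :
    ∑ zs, f zs = ∑ z, ∑ zs : Fin t → α, f (Fin.snoc zs z) := by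
  rw [← (Fin.snocEquiv fun _ => α).sum_comp, Fintype.sum_prod_type]
  rfl

theorem sum_sum_pmf_mul_indicator {α β : Type*} [Fintype α] [Fintype β] [DecidableEq β]
    (p : PMF α) (g : α → β) :
    ∑ b, ∑ a, p a * (if b = g a then 1 else 0) = 1 := by
  rw [Finset.sum_comm]
  simp [PMF.sum_coe_eq_one]

namespace NoisyFeedback

section Factorization

variable {W X Y Z U : Type*} (Qf : X → PMF Y) (Qb : Y → PMF Z)
  (G2 : U → (W × U → X) → Z → W → U) (u1 : U) (φ : ℕ → W × U → X)

theorem mem_snoc (w : W) (t : ℕ) (zs : Fin t → Z) (z : Z) :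
    mem G2 u1 φ w (t + 1) (Fin.snoc zs z) = G2 (mem G2 u1 φ w t zs) (φ t) z w := by
  simp only [mem, Fin.init_snoc, Fin.snoc_last]

variable [Fintype W]

theorem jointP_succ (t : ℕ) (w : W) (ys : Fin (t + 1) → Y) (zs : Fin (t + 1) → Z) :
    jointP Qf Qb G2 u1 φ (t + 1) w ys zs =
      jointP Qf Qb G2 u1 φ t w (Fin.init ys) (Fin.init zs) *
        (Qf (φ t (w, mem G2 u1 φ w t (Fin.init zs))) (ys (Fin.last t)) *
          Qb (ys (Fin.last t)) (zs (Fin.last t))) := by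
  rw [jointP, Fin.prod_univ_castSucc, ← mul_assoc]
  rfl

theorem jointP_ne_top (t : ℕ) (w : W) (ys : Fin t → Y) (zs : Fin t → Z) :
    jointP Qf Qb G2 u1 φ t w ys zs ≠ ⊤ := by
  have : Nonempty W := ⟨w⟩
  exact ENNReal.mul_ne_top (by simp [Fintype.card_ne_zero]) <| ENNReal.prod_ne_top fun _ _ =>
    ENNReal.mul_ne_top (PMF.apply_ne_top _ _) (PMF.apply_ne_top _ _)

variable [Fintype Z]

theorem probWY_ne_top (t : ℕ) (ys : Fin t → Y) (w : W) :
    probWY Qf Qb G2 u1 φ t ys w ≠ ⊤ :=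
  ENNReal.sum_ne_top.2 fun zs _ => jointP_ne_top Qf Qb G2 u1 φ t w ys zs

theorem probWUUY_eq_mul (t : ℕ) (ys : Fin (t + 1) → Y) (w : W) (u u' : U) :
    probWUUY Qf Qb G2 u1 φ t ys w u u' =
      probWUY Qf Qb G2 u1 φ t (Fin.init ys) w u * Qf (φ t (w, u)) (ys (Fin.last t)) *
        ∑ z, Qb (ys (Fin.last t)) z * (if u' = G2 u (φ t) z w then 1 else 0) := by
  rw [probWUUY, probWUY, Fintype.sum_fin_succ_pi_eq_sum_snoc, Finset.sum_comm, Finset.sum_mul,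
    Finset.sum_mul]
  refine Finset.sum_congr rfl fun zs _ => ?_
  rw [Finset.mul_sum]
  refine Finset.sum_congr rfl fun z _ => ?_
  rw [jointP_succ, mem_snoc, Fin.init_snoc, Fin.snoc_last]
  rcases eq_or_ne (mem G2 u1 φ w t zs) u with rfl | hne
  · split_ifs <;> simp_all [eq_comm, mul_assoc]
  · simp [hne]

variable [Fintype U]

theorem sum_probWUY (t : ℕ) (ys : Fin t → Y) (w : W) :
    ∑ u, probWUY Qf Qb G2 u1 φ t ys w u = probWY Qf Qb G2 u1 φ t ys w := by
  simp_rw [probWUY, probWY, Finset.sum_comm (γ := U)]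
  simp

theorem sum_sum_probWUUY (t : ℕ) (ys : Fin (t + 1) → Y) (w : W) :
    ∑ u, ∑ u', probWUUY Qf Qb G2 u1 φ t ys w u u' = probWY Qf Qb G2 u1 φ (t + 1) ys w := by
  simp_rw [probWUUY, probWY, Finset.sum_comm (γ := U) (α := Fin (t + 1) → Z)]
  simp [ite_and]

theorem probWY_succ (t : ℕ) (ys : Fin (t + 1) → Y) (w : W) :
    probWY Qf Qb G2 u1 φ (t + 1) ys w =
      ∑ u, probWUY Qf Qb G2 u1 φ t (Fin.init ys) w u * Qf (φ t (w, u)) (ys (Fin.last t)) := by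
  rw [← sum_sum_probWUUY]
  simp only [probWUUY_eq_mul, ← Finset.mul_sum, sum_sum_pmf_mul_indicator, mul_one]

end Factorization

variable {W X Y Z U : Type*} [Fintype W] [Fintype X] [Fintype Y] [Fintype Z] [Fintype U]

theorem posterior_UU_update_general
    (Qf : X → PMF Y) (Qb : Y → PMF Z)
    (G2 : U → (W × U → X) → Z → W → U) (u1 : U) (φ : ℕ → W × U → X)
    (t : ℕ) (w : W) (ys : Fin (t + 1) → Y)
    (hpos : 0 < probWY Qf Qb G2 u1 φ (t + 1) ys w)
    (ut ut1 : U) :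
    probWUUY Qf Qb G2 u1 φ t ys w ut ut1 / probWY Qf Qb G2 u1 φ (t + 1) ys w =
      ((probWUY Qf Qb G2 u1 φ t (Fin.init ys) w ut /
            probWY Qf Qb G2 u1 φ t (Fin.init ys) w) *
          Qf (φ t (w, ut)) (ys (Fin.last t)) *
          ∑ z : Z, Qb (ys (Fin.last t)) z *
            (if ut1 = G2 ut (φ t) z w then 1 else 0)) /
        ∑ u : U,
          (probWUY Qf Qb G2 u1 φ t (Fin.init ys) w u /
              probWY Qf Qb G2 u1 φ t (Fin.init ys) w) *
            Qf (φ t (w, u)) (ys (Fin.last t)) := by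
  set D := probWY Qf Qb G2 u1 φ t (Fin.init ys) w
  have hD0 : D ≠ 0 := by
    intro hD
    have hB : ∀ u, probWUY Qf Qb G2 u1 φ t (Fin.init ys) w u = 0 := by
      simpa [D, ← sum_probWUY] using hD
    simp [probWY_succ, hB] at hpos
  have hDtop : D ≠ ⊤ := probWY_ne_top Qf Qb G2 u1 φ t (Fin.init ys) w
  rw [probWUUY_eq_mul, probWY_succ]
  simp only [fun x => (ENNReal.div_eq_inv_mul : x / D = D⁻¹ * x), mul_assoc, ← Finset.mul_sum]
  exact (ENNReal.mul_div_mul_left _ _ (ENNReal.inv_ne_zero.2 hDtop)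
    (ENNReal.inv_ne_top.2 hD0)).symm

/-- **Policy-independent update of the conditional law of `(U_t, U_{t+1})` given the
message** (Statement 3).  With `η_{t-1}(u) = P(U_t = u | Y_{1:t-1}, W = w)`, the
conditional law of `(U_t, U_{t+1})` given `(Y_{1:t}, W = w)` depends only on
`η_{t-1}`, the current encoding function and the current output. -/
theorem posterior_UU_update [Nonempty W] [Nonempty X] [Nonempty Y] [Nonempty Z] [Nonempty U]
    (Qf : X → PMF Y) (Qb : Y → PMF Z)
    (G2 : U → (W × U → X) → Z → W → U) (u1 : U) (φ : ℕ → W × U → X)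
    (n t : ℕ) (ht : t + 1 ≤ n) (w : W) (ys : Fin (t + 1) → Y)
    (hpos : 0 < probWY Qf Qb G2 u1 φ (t + 1) ys w)
    (ut ut1 : U) :
    probWUUY Qf Qb G2 u1 φ t ys w ut ut1 / probWY Qf Qb G2 u1 φ (t + 1) ys w =
      ((probWUY Qf Qb G2 u1 φ t (Fin.init ys) w ut /
            probWY Qf Qb G2 u1 φ t (Fin.init ys) w) *
          Qf (φ t (w, ut)) (ys (Fin.last t)) *
          ∑ z : Z, Qb (ys (Fin.last t)) z *
            (if ut1 = G2 ut (φ t) z w then 1 else 0)) /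
        ∑ u : U,
          (probWUY Qf Qb G2 u1 φ t (Fin.init ys) w u /
              probWY Qf Qb G2 u1 φ t (Fin.init ys) w) *
            Qf (φ t (w, u)) (ys (Fin.last t)) :=
  posterior_UU_update_general Qf Qb G2 u1 φ t w ys hpos ut ut1

end NoisyFeedback
end

section
/- (Lemma 4a of the Appendix.) In the channel model with a history-dependent deterministic encoder ψ, define the belief process (Π_0, H_0) := (uniform on 𝒲, w ↦ point mass at u₁) and (Π_t, H_t) := F(Π_{t-1}, H_{t-1}, φ^{Z_{1:t-1}}_t, Y_t). Then for every 1 ≤ t ≤ n, every w ∈ 𝒲 and every z_{1:t} ∈ 𝒵^t with P(W = w, Z_{1:t} = z_{1:t}) > 0, letting σ_t be the conditional law of (Π_{t-1}, H_{t-1}) given (W = w, Z_{1:t-1} = z_{1:t-1}) and u_t the memory determined by (w, z_{1:t-1}) via G², the conditional law of (Π_t, H_t) given (W = w, Z_{1:t} = z_{1:t}) equals G¹(σ_t, φ^{z_{1:t-1}}_t, z_t, u_t, w). -/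
open scoped ENNReal Classical
open Finset

namespace NoisyFeedback

variable {W X Y Z U : Type*}

variable [Fintype W] [Fintype X] [Fintype Y] [Fintype Z] [Fintype U]

/-- Belief states of the receiver: a belief `π` on the message together with, for each
message `w`, a belief `η w` on the sender's memory. -/
@[reducible] def Belief (W U : Type*) : Type _ := (W → ℝ≥0∞) × (W → U → ℝ≥0∞)

/-- Update map `F¹` of the receiver's belief on the message. -/
noncomputable def F1 (Qf : X → PMF Y) (p : Belief W U) (φ : W × U → X) (y : Y) :
    W → ℝ≥0∞ := fun w =>
  p.1 w * (∑ u : U, p.2 w u * Qf (φ (w, u)) y) /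
    ∑ w' : W, p.1 w' * ∑ u : U, p.2 w' u * Qf (φ (w', u)) y

/-- Update map `F²` of the receiver's conditional belief on the sender's memory. -/
noncomputable def F2 (Qf : X → PMF Y) (Qb : Y → PMF Z)
    (G2 : U → (W × U → X) → Z → W → U) (p : Belief W U) (φ : W × U → X) (y : Y) :
    W → U → ℝ≥0∞ := fun w u' =>
  (∑ u : U, ∑ z : Z,
      p.2 w u * Qf (φ (w, u)) y * Qb y z * (if u' = G2 u φ z w then 1 else 0)) /
    ∑ u : U, p.2 w u * Qf (φ (w, u)) y

/-- Combined belief update `F = (F¹, F²)`. -/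
noncomputable def Fb (Qf : X → PMF Y) (Qb : Y → PMF Z)
    (G2 : U → (W × U → X) → Z → W → U) (p : Belief W U) (φ : W × U → X) (y : Y) :
    Belief W U :=
  (F1 Qf p φ y, F2 Qf Qb G2 p φ y)

/-- Sender belief update `G¹`: update of the sender's belief `σ` over receiver belief
states upon transmitting with encoding function `φ` (with memory `u`, message `w`)
and receiving feedback `z`. -/
noncomputable def G1 (Qf : X → PMF Y) (Qb : Y → PMF Z)
    (G2 : U → (W × U → X) → Z → W → U) (σ : Belief W U → ℝ≥0∞)
    (φ : W × U → X) (z : Z) (u : U) (w : W) : Belief W U → ℝ≥0∞ := fun b =>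
  (∑' p : Belief W U, σ p * ∑ y : Y,
      Qf (φ (w, u)) y * Qb y z * (if b = Fb Qf Qb G2 p φ y then 1 else 0)) /
    ∑ y : Y, Qf (φ (w, u)) y * Qb y z

/-- Initial belief state: uniform on the messages, point mass at `u1` on the memory. -/
noncomputable def b0 [Fintype W] (u1 : U) : Belief W U :=
  (fun _ => (Fintype.card W : ℝ≥0∞)⁻¹, fun _ u => if u = u1 then 1 else 0)

/-- Initial sender belief: point mass at the initial belief state `b0`. -/
noncomputable def σ0 [Fintype W] (u1 : U) : Belief W U → ℝ≥0∞ := fun b =>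
  if b = b0 u1 then 1 else 0

/-- The receiver belief process `(Π_t, H_t)` as a function of the channel outputs,
under the Markov encoders `φ`. -/
noncomputable def beliefs (Qf : X → PMF Y) (Qb : Y → PMF Z)
    (G2 : U → (W × U → X) → Z → W → U) (u1 : U) (φ : ℕ → W × U → X) :
    (t : ℕ) → (Fin t → Y) → Belief W U
  | 0, _ => b0 u1
  | t + 1, ys =>
      Fb Qf Qb G2 (beliefs Qf Qb G2 u1 φ t (Fin.init ys)) (φ t) (ys (Fin.last t))

/-- Memory evolution under a history-dependent encoder `ψ`:
`U_{t+1} = G²(U_t, φ^{z_{1:t-1}}_t, Z_t, W)` where `φ^{z_{1:t-1}}_t (w', u') = ψ_t (w', z_{1:t-1})`. -/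
def memψ (G2 : U → (W × U → X) → Z → W → U) (u1 : U)
    (ψ : (t : ℕ) → W → (Fin t → Z) → X) (w : W) :
    (t : ℕ) → (Fin t → Z) → U
  | 0, _ => u1
  | t + 1, zs =>
      G2 (memψ G2 u1 ψ w t (Fin.init zs))
        (fun p : W × U => ψ t p.1 (Fin.init zs)) (zs (Fin.last t)) w

/-- Joint pmf `P(W = w, Y_{1:t} = ys, Z_{1:t} = zs)` of the channel model with a
history-dependent deterministic encoder `ψ` (so `X_t = ψ_t (W, Z_{1:t-1})`). -/
noncomputable def jointPψ (Qf : X → PMF Y) (Qb : Y → PMF Z)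
    (ψ : (t : ℕ) → W → (Fin t → Z) → X)
    (t : ℕ) (w : W) (ys : Fin t → Y) (zs : Fin t → Z) : ℝ≥0∞ :=
  (Fintype.card W : ℝ≥0∞)⁻¹ *
    ∏ i : Fin t,
      Qf (ψ i w (fun j => zs (Fin.castLE i.2.le j))) (ys i) * Qb (ys i) (zs i)

/-- `P(W = w, Z_{1:t} = zs)` under the encoder `ψ`. -/
noncomputable def probWZψ (Qf : X → PMF Y) (Qb : Y → PMF Z)
    (ψ : (t : ℕ) → W → (Fin t → Z) → X)
    (t : ℕ) (w : W) (zs : Fin t → Z) : ℝ≥0∞ :=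
  ∑ ys : Fin t → Y, jointPψ Qf Qb ψ t w ys zs

/-- `P(W = w, Y_{1:t} = ys)` under the encoder `ψ`. -/
noncomputable def probWYψ (Qf : X → PMF Y) (Qb : Y → PMF Z)
    (ψ : (t : ℕ) → W → (Fin t → Z) → X)
    (t : ℕ) (ys : Fin t → Y) (w : W) : ℝ≥0∞ :=
  ∑ zs : Fin t → Z, jointPψ Qf Qb ψ t w ys zs

/-- The receiver belief process `(Π_t, H_t)` under a history-dependent encoder `ψ`:
`(Π_0, H_0) = (uniform, point mass at u₁)` and
`(Π_t, H_t) = F(Π_{t-1}, H_{t-1}, φ^{z_{1:t-1}}_t, y_t)`. -/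
noncomputable def beliefsψ (Qf : X → PMF Y) (Qb : Y → PMF Z)
    (G2 : U → (W × U → X) → Z → W → U) (u1 : U)
    (ψ : (t : ℕ) → W → (Fin t → Z) → X) :
    (t : ℕ) → (Fin t → Y) → (Fin t → Z) → Belief W U
  | 0, _, _ => b0 u1
  | t + 1, ys, zs =>
      Fb Qf Qb G2 (beliefsψ Qf Qb G2 u1 ψ t (Fin.init ys) (Fin.init zs))
        (fun p : W × U => ψ t p.1 (Fin.init zs)) (ys (Fin.last t))

/-! The sender knows `w` and `z_{1:t}`, hence the input `x_t = ψ_t(w, z_{1:t-1})`. Splitting an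
output history `y_{1:t}` into `y_{1:t-1}` and `y_t`, the joint mass factors as the mass of the
shorter history times `Q^f(y_t | x_t) Q^b(z_t | y_t)`, and `(Π_t, H_t)` is the image of
`(Π_{t-1}, H_{t-1})` under `F(·, φ_t, y_t)`. Grouping the shorter histories by the belief state they
produce turns the numerator of the conditional law into the numerator of `G¹`, and the
normaliser `P(W = w, Z_{1:t} = z_{1:t})` factors in the same way. -/

lemma sum_pi_fin_succ_eq_sum_sum_snoc {M : Type*} [AddCommMonoid M] (s : ℕ)
    (f : (Fin (s + 1) → Y) → M) :
    ∑ ys : Fin (s + 1) → Y, f ys = ∑ ys : Fin s → Y, ∑ y : Y, f (Fin.snoc ys y) := by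
  rw [← Fintype.sum_equiv (Fin.snocEquiv fun _ => Y) (fun p => f (Fin.snoc p.2 p.1)) f
    (fun _ => rfl), Fintype.sum_prod_type, Finset.sum_comm]

lemma tsum_sum_ite_eq_mul {α β : Type*} [Fintype α] [DecidableEq β] (B : α → β) (m : α → ℝ≥0∞)
    (g : β → ℝ≥0∞) :
    ∑' p, (∑ a, if B a = p then m a else 0) * g p = ∑ a, m a * g (B a) := by
  simp_rw [Finset.sum_mul, ite_mul, zero_mul]
  rw [Summable.tsum_finsetSum fun _ _ => ENNReal.summable]
  exact Finset.sum_congr rfl fun a _ => tsum_ite_eq' (B a) _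

/-- `P(W = w, Z_{1:t} = zs, (Π_t, H_t) = b)` under the encoder `ψ`. -/
noncomputable def probWZBψ (Qf : X → PMF Y) (Qb : Y → PMF Z)
    (G2 : U → (W × U → X) → Z → W → U) (u1 : U)
    (ψ : (t : ℕ) → W → (Fin t → Z) → X)
    (t : ℕ) (w : W) (zs : Fin t → Z) (b : Belief W U) : ℝ≥0∞ :=
  ∑ ys : Fin t → Y,
    if beliefsψ Qf Qb G2 u1 ψ t ys zs = b then jointPψ Qf Qb ψ t w ys zs else 0

section Recursion

variable (Qf : X → PMF Y) (Qb : Y → PMF Z) (G2 : U → (W × U → X) → Z → W → U) (u1 : U)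
  (ψ : (t : ℕ) → W → (Fin t → Z) → X) (s : ℕ) (w : W)

omit [Fintype X] [Fintype Y] [Fintype Z] in
lemma jointPψ_snoc (ys : Fin s → Y) (y : Y) (zs : Fin (s + 1) → Z) :
    jointPψ Qf Qb ψ (s + 1) w (Fin.snoc ys y) zs =
      jointPψ Qf Qb ψ s w ys (Fin.init zs) *
        (Qf (ψ s w (Fin.init zs)) y * Qb y (zs (Fin.last s))) := by
  rw [jointPψ, jointPψ, Fin.prod_univ_castSucc, ← mul_assoc]
  simp only [Fin.snoc_castSucc, Fin.snoc_last]
  rfl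

omit [Fintype X] [Fintype Y] in
lemma beliefsψ_snoc (ys : Fin s → Y) (y : Y) (zs : Fin (s + 1) → Z) :
    beliefsψ Qf Qb G2 u1 ψ (s + 1) (Fin.snoc ys y) zs =
      Fb Qf Qb G2 (beliefsψ Qf Qb G2 u1 ψ s ys (Fin.init zs))
        (fun p : W × U => ψ s p.1 (Fin.init zs)) y := by
  rw [beliefsψ, Fin.init_snoc, Fin.snoc_last]

omit [Fintype X] [Fintype Z] in
lemma probWZψ_succ (zs : Fin (s + 1) → Z) :
    probWZψ Qf Qb ψ (s + 1) w zs =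
      probWZψ Qf Qb ψ s w (Fin.init zs) *
        ∑ y : Y, Qf (ψ s w (Fin.init zs)) y * Qb y (zs (Fin.last s)) := by
  simp only [probWZψ, sum_pi_fin_succ_eq_sum_sum_snoc, jointPψ_snoc, Finset.sum_mul_sum]

omit [Fintype X] in
lemma probWZBψ_succ (zs : Fin (s + 1) → Z) (b : Belief W U) :
    probWZBψ Qf Qb G2 u1 ψ (s + 1) w zs b =
      ∑' p : Belief W U, probWZBψ Qf Qb G2 u1 ψ s w (Fin.init zs) p *
        ∑ y : Y, Qf (ψ s w (Fin.init zs)) y * Qb y (zs (Fin.last s)) *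
          if b = Fb Qf Qb G2 p (fun p : W × U => ψ s p.1 (Fin.init zs)) y then 1 else 0 := by
  unfold probWZBψ
  rw [sum_pi_fin_succ_eq_sum_sum_snoc, tsum_sum_ite_eq_mul]
  refine Finset.sum_congr rfl fun ys _ => ?_
  rw [Finset.mul_sum]
  refine Finset.sum_congr rfl fun y _ => ?_
  rw [jointPψ_snoc, beliefsψ_snoc]
  simp only [mul_ite, mul_one, mul_zero, @eq_comm _ b]

end Recursion

theorem sender_belief_consistency_general
    (Qf : X → PMF Y) (Qb : Y → PMF Z)
    (G2 : U → (W × U → X) → Z → W → U) (u1 : U)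
    (ψ : (t : ℕ) → W → (Fin t → Z) → X)
    (s : ℕ) (w : W) (zs : Fin (s + 1) → Z)
    (hpos : 0 < probWZψ Qf Qb ψ (s + 1) w zs)
    (b : Belief W U) :
    (∑ ys : Fin (s + 1) → Y,
        if beliefsψ Qf Qb G2 u1 ψ (s + 1) ys zs = b then
          jointPψ Qf Qb ψ (s + 1) w ys zs
        else 0) / probWZψ Qf Qb ψ (s + 1) w zs =
      G1 Qf Qb G2
        (fun b' =>
          (∑ ys : Fin s → Y,
            if beliefsψ Qf Qb G2 u1 ψ s ys (Fin.init zs) = b' then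
              jointPψ Qf Qb ψ s w ys (Fin.init zs)
            else 0) / probWZψ Qf Qb ψ s w (Fin.init zs))
        (fun p : W × U => ψ s p.1 (Fin.init zs)) (zs (Fin.last s))
        (memψ G2 u1 ψ w s (Fin.init zs)) w b := by
  change probWZBψ Qf Qb G2 u1 ψ (s + 1) w zs b / _ =
    G1 Qf Qb G2 (fun b' => probWZBψ Qf Qb G2 u1 ψ s w (Fin.init zs) b' / _) _ _ _ w b
  set D := probWZψ Qf Qb ψ s w (Fin.init zs)
  set c := ∑ y : Y, Qf (ψ s w (Fin.init zs)) y * Qb y (zs (Fin.last s))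
  have hDc : probWZψ Qf Qb ψ (s + 1) w zs = D * c := probWZψ_succ Qf Qb ψ s w zs
  obtain ⟨hD, hc⟩ := mul_ne_zero_iff.mp (hDc ▸ hpos.ne')
  have tsum_div : ∀ m g : Belief W U → ℝ≥0∞, ∑' p, m p / D * g p = (∑' p, m p * g p) / D := by
    intro m g
    simp only [div_eq_mul_inv, mul_right_comm _ D⁻¹, ENNReal.tsum_mul_right]
  rw [G1, tsum_div, probWZBψ_succ, hDc, div_eq_mul_inv, div_eq_mul_inv, div_eq_mul_inv,
    ENNReal.mul_inv (Or.inl hD) (Or.inr hc), mul_assoc]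

/-- **Lemma 4a of the Appendix** (Statement 11).  Along any positive-probability
feedback history `z_{1:t}` (here `t = s + 1 ≤ n`), the conditional law of the
receiver's belief state `(Π_t, H_t)` given the sender's information
`(W = w, Z_{1:t} = z_{1:t})` is obtained from the previous conditional law `σ_t` by
the sender's belief-update map: it equals `G¹(σ_t, φ^{z_{1:t-1}}_t, z_t, u_t, w)`,
where `u_t` is the memory determined by `(w, z_{1:t-1})`. -/
theorem sender_belief_consistency
    [Nonempty W] [Nonempty X] [Nonempty Y] [Nonempty Z] [Nonempty U]
    (Qf : X → PMF Y) (Qb : Y → PMF Z)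
    (G2 : U → (W × U → X) → Z → W → U) (u1 : U)
    (ψ : (t : ℕ) → W → (Fin t → Z) → X) (n : ℕ)
    (s : ℕ) (hs : s + 1 ≤ n) (w : W) (zs : Fin (s + 1) → Z)
    (hpos : 0 < probWZψ Qf Qb ψ (s + 1) w zs)
    (b : Belief W U) :
    (∑ ys : Fin (s + 1) → Y,
        if beliefsψ Qf Qb G2 u1 ψ (s + 1) ys zs = b then
          jointPψ Qf Qb ψ (s + 1) w ys zs
        else 0) / probWZψ Qf Qb ψ (s + 1) w zs =
      G1 Qf Qb G2
        (fun b' =>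
          (∑ ys : Fin s → Y,
            if beliefsψ Qf Qb G2 u1 ψ s ys (Fin.init zs) = b' then
              jointPψ Qf Qb ψ s w ys (Fin.init zs)
            else 0) / probWZψ Qf Qb ψ s w (Fin.init zs))
        (fun p : W × U => ψ s p.1 (Fin.init zs)) (zs (Fin.last s))
        (memψ G2 u1 ψ w s (Fin.init zs)) w b :=
  sender_belief_consistency_general Qf Qb G2 u1 ψ s w zs hpos b

end NoisyFeedback
end
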